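/- arXiv:2410.07638 — 4 statements merged into one kernel-verified Lean document; each statement's English description precedes it below -/
import Mathlib

section
/- Let a, b, c > 0 with ac ≥ 1/2. If t ≥ max{2a·ln(b), 4ac·ln(2ac)}, then t ≥ a·ln(b·t^c). -/
/-!
Write `A = a c`. Since `e ≥ 2`, `log u ≤ u / e ≤ u / 2`; applied to `u = t / (2A)` this gives
`A log t ≤ A log (2A) + t / 4`, and the second half of the hypothesis on `t` bounds
`A log (2A)` by `t / 4`. Hence `A log t ≤ t / 2`, while `a log b ≤ t / 2` is the first half.
-/

open Real

lemma Real.log_le_half_self {u : ℝ} (hu : 0 < u) : log u ≤ u / 2 := by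
  have h_exp : exp 1 * log u ≤ u := by
    simpa only [exp_log hu] using exp_one_mul_le_exp (x := log u)
  have two_le_exp_one : 2 ≤ exp 1 := by linarith [add_one_le_exp 1]
  rcases le_or_gt 0 (log u) with hlog | hlog
  · nlinarith
  · linarith

lemma Real.nonneg_of_four_mul_mul_log_le {A t : ℝ} (hA : 1 / 2 ≤ A)
    (ht : 4 * A * log (2 * A) ≤ t) : 0 ≤ t := by
  have := log_nonneg (by linarith : (1 : ℝ) ≤ 2 * A)
  exact le_trans (by positivity) ht

lemma Real.mul_log_le_half_of_four_mul_mul_log_le {A t : ℝ} (hA : 1 / 2 ≤ A)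
    (ht : 4 * A * log (2 * A) ≤ t) : A * log t ≤ t / 2 := by
  have h2A : 0 < 2 * A := by linarith
  rcases (nonneg_of_four_mul_mul_log_le hA ht).eq_or_lt with rfl | htpos
  · simp
  have h_ratio : log (t / (2 * A)) ≤ t / (2 * A) / 2 := log_le_half_self (by positivity)
  rw [log_div htpos.ne' h2A.ne'] at h_ratio
  calc A * log t = A * log (2 * A) + A * (log t - log (2 * A)) := by ring
    _ ≤ t / 4 + A * (t / (2 * A) / 2) := by gcongr; linarith
    _ = t / 2 := by field_simp; ring

theorem stmt0_general (a b c t : ℝ) (hb : 0 < b) (hc : 0 < c)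
    (hac : 1/2 ≤ a * c)
    (ht : max (2 * a * Real.log b) (4 * a * c * Real.log (2 * a * c)) ≤ t) :
    a * Real.log (b * t ^ c) ≤ t := by
  obtain ⟨ht_b, ht_ac⟩ := max_le_iff.mp ht
  replace ht_ac : 4 * (a * c) * log (2 * (a * c)) ≤ t := by simpa only [mul_assoc] using ht_ac
  rcases (nonneg_of_four_mul_mul_log_le hac ht_ac).eq_or_lt with rfl | htpos
  · simp [zero_rpow hc.ne']
  rw [log_mul hb.ne' (rpow_pos_of_pos htpos c).ne', log_rpow htpos]
  linarith [mul_log_le_half_of_four_mul_mul_log_le hac ht_ac]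

theorem stmt0 (a b c t : ℝ) (ha : 0 < a) (hb : 0 < b) (hc : 0 < c)
    (hac : 1/2 ≤ a * c)
    (ht : max (2 * a * Real.log b) (4 * a * c * Real.log (2 * a * c)) ≤ t) :
    a * Real.log (b * t ^ c) ≤ t :=
  stmt0_general a b c t hb hc hac ht
end

section
/- Let p, p̂, β ≥ 0 with p̂ ≤ p + (5/2)·max{ (4/75)·p̂, √( (8/25)·p(1−p)·p̂ ) }. Then p̂ ≤ 4p. -/
/-! If `p̂ > 4p`, the linear branch of the maximum would force `p̂ ≤ (15/13) p`, while the
square-root branch, after bounding `p (1 - p) ≤ p`, gives `(p̂ - p)² ≤ 2 p p̂`, whose roots in `p̂`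
are `(2 ± √3) p`. -/

lemma le_four_mul_of_sub_sq_le {p x : ℝ} (hp : 0 ≤ p) (h : (x - p) ^ 2 ≤ 2 * p * x) :
    x ≤ 4 * p := by
  nlinarith

lemma le_four_mul_of_le_add_sqrt {p x : ℝ} (hp : 0 ≤ p) (h : x ≤ p + √(2 * p * x)) :
    x ≤ 4 * p := by
  rcases le_or_gt x p with hxp | hpx
  · linarith
  · have hsub : x - p ≤ √(2 * p * x) := by linarith
    refine le_four_mul_of_sub_sq_le hp ?_
    rwa [Real.le_sqrt (by linarith) (by nlinarith)] at hsub

lemma five_halves_mul_sqrt_le {p x : ℝ} (hx : 0 ≤ x) :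
    5 / 2 * √(8 / 25 * p * (1 - p) * x) ≤ √(2 * p * x) := by
  rw [show (5 / 2 : ℝ) = √(25 / 4) by
    rw [show (25 / 4 : ℝ) = (5 / 2) ^ 2 by norm_num, Real.sqrt_sq (by norm_num)],
    ← Real.sqrt_mul (by norm_num)]
  apply Real.sqrt_le_sqrt
  nlinarith [mul_nonneg (sq_nonneg p) hx]

theorem stmt9_general (p phat : ℝ) (hp : 0 ≤ p) (hphat : 0 ≤ phat)
    (h : phat ≤ p + 5 / 2 * max (4 / 75 * phat)
          (Real.sqrt (8 / 25 * p * (1 - p) * phat))) :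
    phat ≤ 4 * p := by
  rw [mul_max_of_nonneg _ _ (by norm_num : (0 : ℝ) ≤ 5 / 2)] at h
  rcases max_choice (5 / 2 * (4 / 75 * phat)) (5 / 2 * √(8 / 25 * p * (1 - p) * phat))
    with hmax | hmax <;> rw [hmax] at h
  · linarith
  · exact le_four_mul_of_le_add_sqrt hp
      (h.trans (add_le_add_right (five_halves_mul_sqrt_le hphat) p))

theorem stmt9 (p phat β : ℝ) (hp : 0 ≤ p) (hphat : 0 ≤ phat) (hβ : 0 ≤ β)
    (h : phat ≤ p + 5 / 2 * max (4 / 75 * phat)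
          (Real.sqrt (8 / 25 * p * (1 - p) * phat))) :
    phat ≤ 4 * p :=
  stmt9_general p phat hp hphat h
end

section
/- Suppose p, p̂, T, L_max > 0 and δ ∈ (0,1) satisfy p·T ≤ p̂·T + (5/4)·√(2p(1−p)·L_max·T·ln(2/δ)) and T_j := p̂·T > 0. Then p/T_j ≤ (4/T)·max{ 1, (25/16)·(L_max/T_j)·ln(2/δ) }. -/
/-!
Write `x = p T` and `K = L_max ln(2/δ)`. Since `p (1 - p) ≤ p`, the hypothesis gives the self-bounding
inequality `x ≤ T_j + b √x` with `b = (5/4) √(2K)`. Either `x ≤ 4 T_j`, or `T_j < x / 4` and then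
`(3/4) x < b √x`, i.e. `x < (16/9) b² = (50/9) K ≤ (25/4) K`. Dividing by `T_j T` gives the claim.
-/

open Real

lemma le_max_of_le_add_mul_sqrt {x a b : ℝ} (hb : 0 ≤ b) (h : x ≤ a + b * √x) :
    x ≤ max (4 * a) (16 / 9 * b ^ 2) := by
  rcases le_or_gt x (4 * a) with hxa | hxa
  · exact le_max_of_le_left hxa
  refine le_max_of_le_right ?_
  rcases le_or_gt x 0 with hx | hx
  · nlinarith
  have hs : √x ^ 2 = x := sq_sqrt hx.le
  have hs_pos : 0 < √x := sqrt_pos.mpr hx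
  have hsb : 3 / 4 * √x < b := by nlinarith
  nlinarith

lemma sqrt_variance_le (p T K : ℝ) (hT : 0 ≤ T) (hK : 0 ≤ K) :
    √(2 * p * (1 - p) * K * T) ≤ √(2 * K) * √(p * T) := by
  rw [← sqrt_mul (by positivity)]
  apply sqrt_le_sqrt
  nlinarith [mul_nonneg (mul_nonneg (sq_nonneg p) hK) hT]

theorem stmt10_general (p phat T Lmax δ : ℝ)
    (hT : 0 < T) (hLmax : 0 < Lmax) (hδ0 : 0 < δ) (hδ1 : δ < 1)
    (h : p * T ≤ phat * T
        + 5 / 4 * Real.sqrt (2 * p * (1 - p) * Lmax * T * Real.log (2 / δ)))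
    (hTj : 0 < phat * T) :
    p / (phat * T)
      ≤ 4 / T * max 1 (25 / 16 * (Lmax / (phat * T)) * Real.log (2 / δ)) := by
  set L := log (2 / δ)
  set Tj := phat * T
  have hL : 0 < L := log_pos (by rw [lt_div_iff₀ hδ0]; linarith)
  have hK : 0 ≤ Lmax * L := by positivity
  have hself : p * T ≤ Tj + 5 / 4 * √(2 * (Lmax * L)) * √(p * T) := by
    have hvar := sqrt_variance_le p T (Lmax * L) hT.le hK
    rw [show 2 * p * (1 - p) * (Lmax * L) * T = 2 * p * (1 - p) * Lmax * T * L by ring] at hvar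
    linarith
  have hbound := le_max_of_le_add_mul_sqrt (by positivity) hself
  rw [mul_pow, sq_sqrt (by positivity)] at hbound
  have hweaken : max (4 * Tj) (16 / 9 * ((5 / 4) ^ 2 * (2 * (Lmax * L))))
      ≤ max (4 * Tj) (25 / 4 * (Lmax * L)) := max_le_max_left _ (by nlinarith)
  calc p / Tj = p * T / Tj / T := by field_simp
    _ ≤ max (4 * Tj) (25 / 4 * (Lmax * L)) / Tj / T := by gcongr; exact hbound.trans hweaken
    _ = 4 / T * max 1 (25 / 16 * (Lmax / Tj) * L) := by
      rw [← max_div_div_right hTj.le, ← max_div_div_right hT.le,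
        mul_max_of_nonneg _ _ (by positivity)]
      congr 1 <;> field_simp
      ring

theorem stmt10 (p phat T Lmax δ : ℝ) (hp : 0 < p) (hphat : 0 < phat)
    (hT : 0 < T) (hLmax : 0 < Lmax) (hδ0 : 0 < δ) (hδ1 : δ < 1)
    (h : p * T ≤ phat * T
        + 5 / 4 * Real.sqrt (2 * p * (1 - p) * Lmax * T * Real.log (2 / δ)))
    (hTj : 0 < phat * T) :
    p / (phat * T)
      ≤ 4 / T * max 1 (25 / 16 * (Lmax / (phat * T)) * Real.log (2 / δ)) :=
  stmt10_general p phat T Lmax δ hT hLmax hδ0 hδ1 h hTj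
end

section
/- Suppose p_1,…,p_N > 0 sum to 1, real gaps g_1,…,g_N satisfy Σ_j p_j g_j > 0, λ > 0, and for all j, 0 < λ·g_j < 1 possibly except when g_j < 0 (but with 1 + λ g_j > 0 for all j; and assume Σ_j p_j g_j³ ≤ 0). If Σ_{j=1}^N p_j/(1 + λ g_j) = 1, then λ ≤ (Σ_j p_j g_j) / (Σ_j p_j g_j²). -/
/-!
Since `(1 + x)(1 - x + x² - x³) = 1 - x⁴ ≤ 1`, every term satisfies
`1/(1 + λg) ≥ 1 - λg + λ²g² - λ³g³`. Averaging against `p` and using the constraint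
`∑ p/(1 + λg) = 1` gives `λ(λ M₂ - M₁ - λ² M₃) ≤ 0` for the moments `Mₖ = ∑ p gᵏ`;
with `λ > 0` and `M₃ ≤ 0` this is `λ M₂ ≤ M₁`. Finally `M₂ > 0` by Cauchy–Schwarz, `M₁² ≤ M₀ M₂`.
-/

open Finset

lemma one_sub_add_sub_le_inv_one_add {x : ℝ} (hx : 0 < 1 + x) :
    1 - x + x ^ 2 - x ^ 3 ≤ (1 + x)⁻¹ := by
  have h : (1 + x)⁻¹ - (1 - x + x ^ 2 - x ^ 3) = x ^ 4 / (1 + x) := by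
    field_simp
    ring
  rw [← sub_nonneg, h]
  positivity

section Moments

variable {ι : Type*} (s : Finset ι) (p g : ι → ℝ)

lemma sum_mul_cubic_expansion (lam : ℝ) :
    ∑ j ∈ s, p j * (1 - lam * g j + (lam * g j) ^ 2 - (lam * g j) ^ 3)
      = ∑ j ∈ s, p j - lam * ∑ j ∈ s, p j * g j + lam ^ 2 * ∑ j ∈ s, p j * g j ^ 2
        - lam ^ 3 * ∑ j ∈ s, p j * g j ^ 3 := by
  simp only [mul_sum, ← sum_sub_distrib, ← sum_add_distrib]
  exact sum_congr rfl fun j _ => by ring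

variable {p g}

lemma moment_expansion_le_sum_div {lam : ℝ} (hp : ∀ j ∈ s, 0 ≤ p j)
    (hpos : ∀ j ∈ s, 0 < 1 + lam * g j) :
    ∑ j ∈ s, p j - lam * ∑ j ∈ s, p j * g j + lam ^ 2 * ∑ j ∈ s, p j * g j ^ 2
        - lam ^ 3 * ∑ j ∈ s, p j * g j ^ 3 ≤ ∑ j ∈ s, p j / (1 + lam * g j) := by
  rw [← sum_mul_cubic_expansion]
  refine sum_le_sum fun j hj => ?_
  rw [div_eq_mul_inv]
  exact mul_le_mul_of_nonneg_left (one_sub_add_sub_le_inv_one_add (hpos j hj)) (hp j hj)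

lemma sq_sum_mul_le_sum_mul_sum_mul_sq (hp : ∀ j ∈ s, 0 ≤ p j) :
    (∑ j ∈ s, p j * g j) ^ 2 ≤ (∑ j ∈ s, p j) * ∑ j ∈ s, p j * g j ^ 2 :=
  sum_sq_le_sum_mul_sum_of_sq_le_mul s hp (fun j hj => mul_nonneg (hp j hj) (sq_nonneg _))
    fun j _ => (by ring : _ = _).le

end Moments

theorem stmt17 (N : ℕ) (p g : Fin N → ℝ) (lam : ℝ)
    (hp : ∀ j, 0 < p j) (hp1 : ∑ j, p j = 1)
    (hg : 0 < ∑ j, p j * g j) (hlam : 0 < lam)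
    (hsmall : ∀ j, |lam * g j| < 1)
    (hcube : ∑ j, p j * (g j) ^ 3 ≤ 0)
    (heq : ∑ j, p j / (1 + lam * g j) = 1) :
    lam ≤ (∑ j, p j * g j) / (∑ j, p j * (g j) ^ 2) := by
  have hp0 : ∀ j ∈ univ, 0 ≤ p j := fun j _ => (hp j).le
  have hbound := moment_expansion_le_sum_div univ hp0
    fun j _ => neg_lt_iff_pos_add'.mp (abs_lt.mp (hsmall j)).1
  have hM₂ : 0 < ∑ j, p j * g j ^ 2 := by
    have := sq_sum_mul_le_sum_mul_sum_mul_sq univ hp0 (g := g)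
    rw [hp1, one_mul] at this
    exact (pow_pos hg 2).trans_le this
  rw [hp1, heq] at hbound
  rw [le_div_iff₀ hM₂]
  nlinarith [mul_nonneg (pow_pos hlam 3).le (neg_nonneg.mpr hcube)]
end
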